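/- Let n ≥ 1, let Y ∈ ℂ^{n×n} be invertible, let V⁰ ∈ ℂⁿ, and let (V_*, s_*) be a base solution of the power flow equations diag(V_*)·conj(Y(V_* − V⁰)) = s_* with all entries of V_* nonzero; assume J_* is invertible with inverse blocks M_*, N_*. Let s ∈ ℂⁿ and set Δs = s − s_*. If 2·√( ‖M_*·conj(Z_*)·diag(conj(Δs)) + N_*·Z_*·diag(Δs)‖ · ‖J_*⁻¹‖ · ‖Z_*·diag(s)‖ ) + ‖M_*·conj(Z_*)·diag(conj(Δs)) + N_*·diag(Z_*·Δs)‖ + ‖M_*·diag(conj(Z_*·Δs)) + N_*·Z_*·diag(Δs)‖ ≤ 1, then there exists V ∈ ℂⁿ with all entries nonzero solving diag(V)·conj(Y(V − V⁰)) = s. -/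

import Mathlib

/-!
Writing `V = V_* ⊙ (1 + x)`, the power flow equations become `(1 + x) ⊙ (s_* + Z_*⁻¹ conj x) = s`,
and the substitution `(1 + x) ⊙ (1 - u) = 1` turns them into a quadratic equation for `u` whose
`ℝ`-linear part at `u = 0` is, up to terms of order `Δs`, the map with matrix `J_*`.
Preconditioning by `J_*⁻¹` gives a fixed-point map `Φ` with `‖Φ 0‖ ≤ a` and
`‖Φ u - Φ v‖ ≤ (β + K (‖u‖ + ‖v‖)) ‖u - v‖`, where `a`, `β`, `K` are the norms in the certificate.
If `2 √(a K) + β ≤ 1`, then `Φ` is a nonexpansive self-map of the ball of radius `√(a / K)`, which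
has a fixed point by compactness. For `s = 0` the certificate instead rules out
`1 + (Z_* Δs)_i = 0`, which would produce a kernel vector of `J_*`, and the solution is explicit.
-/

open Matrix

/-- ℓ∞ norm of a complex vector: `max_i |x_i|`. -/
noncomputable def vnorm {n : ℕ} (x : Fin n → ℂ) : ℝ := ⨆ i, ‖x i‖

/-- Induced ∞-matrix norm: `max_i ∑_j |A_{ij}|`. -/
noncomputable def mnorm {n : ℕ} (A : Matrix (Fin n) (Fin n) ℂ) : ℝ :=
  ⨆ i, ∑ j, ‖A i j‖

/-- Induced ∞-matrix norm for 2n×2n block matrices. -/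
noncomputable def mnorm2 {n : ℕ} (A : Matrix (Fin n ⊕ Fin n) (Fin n ⊕ Fin n) ℂ) : ℝ :=
  ⨆ i, ∑ j, ‖A i j‖

/-- Entrywise complex conjugation of a matrix. -/
def mconj {n : ℕ} (A : Matrix (Fin n) (Fin n) ℂ) : Matrix (Fin n) (Fin n) ℂ :=
  A.map (starRingEnd ℂ)

section FixedPoint

open Set Metric

variable {E : Type*} [NormedAddCommGroup E] [NormedSpace ℝ E]

/-- Fixed points of the contractions `y ↦ x₀ + t • (Φ y - x₀)`, `t → 1`, are approximate fixed
points of `Φ`; compactness turns the minimiser of `‖Φ y - y‖` into an exact one. -/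
theorem exists_fixedPt_of_lipschitzOnWith_one {s : Set E} (hs : IsCompact s)
    (hconv : Convex ℝ s) (hne : s.Nonempty) {Φ : E → E} (hmaps : MapsTo Φ s s)
    (hΦ : LipschitzOnWith 1 Φ s) : ∃ x ∈ s, Φ x = x := by
  obtain ⟨x₀, hx₀⟩ := hne
  obtain ⟨C, hC⟩ := (isBounded_iff_subset_closedBall x₀).1 hs.isBounded
  have hC₀ : 0 ≤ C := by simpa using hC hx₀
  have approx : ∀ ε > 0, ∃ y ∈ s, ‖Φ y - y‖ ≤ ε := by
    intro ε hε
    set t := C / (C + ε)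
    have ht₀ : 0 ≤ t := by positivity
    have ht₁ : t < 1 := (div_lt_one (by positivity)).2 (by linarith)
    let g : s → s := fun y =>
      ⟨x₀ + t • (Φ y - x₀), hconv.add_smul_sub_mem hx₀ (hmaps y.2) ⟨ht₀, ht₁.le⟩⟩
    have hg : ContractingWith ⟨t, ht₀⟩ g := by
      refine ⟨ht₁, LipschitzWith.of_dist_le_mul fun y z => ?_⟩
      have hyz : dist (Φ y) (Φ z) ≤ dist (y : E) z := by simpa using hΦ.dist_le_mul _ y.2 _ z.2
      change dist (x₀ + t • (Φ y - x₀)) (x₀ + t • (Φ z - x₀)) ≤ t * dist (y : E) z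
      rw [dist_add_left, dist_smul₀, dist_sub_right, Real.norm_of_nonneg ht₀]
      exact mul_le_mul_of_nonneg_left hyz ht₀
    have : CompleteSpace s := hs.isComplete.completeSpace_coe
    have : Nonempty s := ⟨⟨x₀, hx₀⟩⟩
    set y := ContractingWith.fixedPoint g hg
    have hy : x₀ + t • (Φ y - x₀) = y := congrArg Subtype.val (hg.fixedPoint_isFixedPt)
    refine ⟨y, y.2, ?_⟩
    have hΦy : dist (Φ y) x₀ ≤ C := mem_closedBall.1 (hC (hmaps y.2))
    have hΦy' : Φ y - y = (1 - t) • (Φ y - x₀) := by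
      set z := Φ y
      rw [← hy]
      module
    calc ‖Φ y - y‖ = (1 - t) * dist (Φ y) x₀ := by
          rw [hΦy', norm_smul, Real.norm_of_nonneg (by linarith), dist_eq_norm]
      _ ≤ (1 - t) * C := by gcongr
      _ = ε * t := by simp only [t]; field_simp; ring
      _ ≤ ε := mul_le_of_le_one_right hε.le ht₁.le
  obtain ⟨x, hxs, hmin⟩ := hs.exists_isMinOn ⟨x₀, hx₀⟩
    (f := fun y => ‖Φ y - y‖) (hΦ.continuousOn.sub continuousOn_id).norm
  refine ⟨x, hxs, eq_of_forall_dist_le fun ε hε => ?_⟩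
  obtain ⟨y, hys, hy⟩ := approx ε hε
  exact dist_eq_norm (Φ x) x ▸ (hmin hys).trans hy

theorem exists_fixedPt_of_norm_sub_le [ProperSpace E] {Φ : E → E} {a β K : ℝ} (hβ : 0 ≤ β)
    (hK : 0 < K) (h₀ : ‖Φ 0‖ ≤ a)
    (hΦ : ∀ u v, ‖Φ u - Φ v‖ ≤ (β + K * (‖u‖ + ‖v‖)) * ‖u - v‖)
    (hcond : 2 * √(a * K) + β ≤ 1) : ∃ u, Φ u = u := by
  have ha : 0 ≤ a := (norm_nonneg _).trans h₀
  set ρ := √(a * K)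
  have hρ : ρ ^ 2 = a * K := Real.sq_sqrt (by positivity)
  -- the radius `r = √(a / K)` balances the constant and the quadratic term: `K r² = a`
  set r := ρ / K
  have hr : 0 ≤ r := by positivity
  have hKr : K * r = ρ := mul_div_cancel₀ ρ hK.ne'
  have hball : ∀ u, ‖u‖ ≤ r → ‖Φ u‖ ≤ r := by
    intro u hu
    have h := hΦ u 0
    rw [norm_zero, add_zero, sub_zero] at h
    have hu' : (β + K * ‖u‖) * ‖u‖ ≤ (β + K * r) * r := by gcongr
    have hρr : a = ρ * r := by rw [← hKr]; nlinarith
    calc ‖Φ u‖ ≤ ‖Φ 0‖ + ‖Φ u - Φ 0‖ := norm_le_norm_add_norm_sub' _ _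
      _ ≤ r := by nlinarith
  have hlip : LipschitzOnWith 1 Φ (closedBall 0 r) := by
    refine LipschitzOnWith.of_dist_le_mul fun u hu v hv => ?_
    rw [mem_closedBall_zero_iff] at hu hv
    rw [dist_eq_norm, dist_eq_norm, NNReal.coe_one, one_mul]
    refine (hΦ u v).trans (mul_le_of_le_one_left (norm_nonneg _) ?_)
    nlinarith
  obtain ⟨u, -, hu⟩ := exists_fixedPt_of_lipschitzOnWith_one (isCompact_closedBall 0 r)
    (convex_closedBall 0 r) (nonempty_closedBall.2 hr)
    (fun u hu => mem_closedBall_zero_iff.2 (hball u (mem_closedBall_zero_iff.1 hu))) hlip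
  exact ⟨u, hu⟩

end FixedPoint

section Conj

variable {n : ℕ}

theorem mconj_mul (A B : Matrix (Fin n) (Fin n) ℂ) : mconj (A * B) = mconj A * mconj B :=
  Matrix.map_mul

theorem mconj_mconj (A : Matrix (Fin n) (Fin n) ℂ) : mconj (mconj A) = A := by
  ext; simp [mconj]

theorem mconj_diagonal (d : Fin n → ℂ) : mconj (diagonal d) = diagonal (star d) := by
  simp [mconj, diagonal_map]

theorem star_mulVec_eq_mconj_mulVec (A : Matrix (Fin n) (Fin n) ℂ) (v : Fin n → ℂ) :
    star (A *ᵥ v) = mconj A *ᵥ star v := by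
  ext i; simp [mulVec, dotProduct, mconj, star_sum]

theorem diagonal_mulVec_eq_mul (d v : Fin n → ℂ) : diagonal d *ᵥ v = d * v :=
  funext (mulVec_diagonal d v)

theorem isUnit_det_mconj {A : Matrix (Fin n) (Fin n) ℂ} (hA : IsUnit A) : IsUnit (mconj A).det := by
  have h : (mconj A).det = starRingEnd ℂ A.det := (RingHom.map_det _ A).symm
  rw [h, isUnit_iff_ne_zero, map_ne_zero]
  exact ((isUnit_iff_isUnit_det A).1 hA).ne_zero

end Conj

section Norms

theorem norm_mulVec_le_iSup_sum_norm {m k : Type*} [Fintype m] [Fintype k] (A : Matrix m k ℂ)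
    (v : k → ℂ) : ‖A *ᵥ v‖ ≤ (⨆ i, ∑ j, ‖A i j‖) * ‖v‖ := by
  have hrow : ∀ i, ∑ j, ‖A i j‖ ≤ ⨆ i, ∑ j, ‖A i j‖ := le_ciSup (Set.finite_range _).bddAbove
  have hnonneg : 0 ≤ ⨆ i, ∑ j, ‖A i j‖ := Real.iSup_nonneg fun i => by positivity
  refine (pi_norm_le_iff_of_nonneg (by positivity)).2 fun i => ?_
  calc ‖(A *ᵥ v) i‖ ≤ ∑ j, ‖A i j‖ * ‖v j‖ := by
        simpa [mulVec, dotProduct] using norm_sum_le Finset.univ fun j => A i j * v j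
    _ ≤ ∑ j, ‖A i j‖ * ‖v‖ := by gcongr with j; exact norm_le_pi_norm v j
    _ = (∑ j, ‖A i j‖) * ‖v‖ := (Finset.sum_mul ..).symm
    _ ≤ (⨆ i, ∑ j, ‖A i j‖) * ‖v‖ := by gcongr; exact hrow i

theorem mulVec_eq_zero_of_iSup_sum_norm_nonpos {m k : Type*} [Fintype m] [Fintype k]
    {A : Matrix m k ℂ} (hA : (⨆ i, ∑ j, ‖A i j‖) ≤ 0) (v : k → ℂ) : A *ᵥ v = 0 :=
  norm_le_zero_iff.1 <| (norm_mulVec_le_iSup_sum_norm A v).trans <|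
    mul_nonpos_of_nonpos_of_nonneg hA (norm_nonneg v)

theorem iSup_sum_norm_pos {m k : Type*} [Fintype m] [Fintype k] {A : Matrix m k ℂ} (hA : A ≠ 0) :
    0 < ⨆ i, ∑ j, ‖A i j‖ := by
  by_contra h
  refine hA (mulVec_injective (funext fun v => ?_))
  rw [mulVec_eq_zero_of_iSup_sum_norm_nonpos (not_lt.1 h) v, zero_mulVec]

variable {n : ℕ}

theorem mnorm_nonneg (A : Matrix (Fin n) (Fin n) ℂ) : 0 ≤ mnorm A :=
  Real.iSup_nonneg fun _ => by positivity

theorem mnorm2_nonneg (A : Matrix (Fin n ⊕ Fin n) (Fin n ⊕ Fin n) ℂ) : 0 ≤ mnorm2 A :=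
  Real.iSup_nonneg fun _ => by positivity

theorem norm_mulVec_le_mnorm (A : Matrix (Fin n) (Fin n) ℂ) (v : Fin n → ℂ) :
    ‖A *ᵥ v‖ ≤ mnorm A * ‖v‖ :=
  norm_mulVec_le_iSup_sum_norm A v

theorem one_le_mnorm_of_mulVec_eq_neg {A : Matrix (Fin n) (Fin n) ℂ} {v : Fin n → ℂ}
    (hv : v ≠ 0) (hA : A *ᵥ v = -v) : 1 ≤ mnorm A := by
  have h := norm_mulVec_le_mnorm A v
  rw [hA, norm_neg] at h
  exact le_of_mul_le_mul_right (by rwa [one_mul]) (norm_pos_iff.2 hv)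

theorem norm_star_pi (v : Fin n → ℂ) : ‖star v‖ = ‖v‖ := by
  simp [Pi.norm_def]

theorem norm_one_pi_le : ‖(1 : Fin n → ℂ)‖ ≤ 1 :=
  (pi_norm_le_iff_of_nonneg zero_le_one).2 fun _ => by simp

end Norms

section PowerFlow

variable {n : ℕ} {Y : Matrix (Fin n) (Fin n) ℂ} {V0 Vs ss : Fin n → ℂ}

theorem mul_eq_one_of_eq_inv (hY : IsUnit Y) (hVs : ∀ i, Vs i ≠ 0) {Z : Matrix (Fin n) (Fin n) ℂ}
    (hZ : Z = (diagonal (star Vs))⁻¹ * (mconj Y)⁻¹ * (diagonal Vs)⁻¹) :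
    diagonal Vs * mconj Y * diagonal (star Vs) * Z = 1 := by
  have hdet : IsUnit (diagonal Vs * mconj Y * diagonal (star Vs)).det := by
    rw [det_mul, det_mul, det_diagonal, det_diagonal]
    refine ((isUnit_iff_ne_zero.2 ?_).mul (isUnit_det_mconj hY)).mul (isUnit_iff_ne_zero.2 ?_)
    all_goals exact Finset.prod_ne_zero_iff.2 fun i _ => by simpa using hVs i
  rw [hZ, ← Matrix.mul_inv_rev, ← Matrix.mul_inv_rev, ← Matrix.mul_assoc]
  exact mul_nonsing_inv _ hdet

theorem powerFlow_mul_one_add (hbase : diagonal Vs *ᵥ star (Y *ᵥ (Vs - V0)) = ss)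
    (x : Fin n → ℂ) :
    diagonal (Vs * (1 + x)) *ᵥ star (Y *ᵥ (Vs * (1 + x) - V0)) =
      (1 + x) * (ss + (diagonal Vs * mconj Y * diagonal (star Vs)) *ᵥ star x) := by
  rw [diagonal_mulVec_eq_mul] at hbase
  have hsplit : Vs * (1 + x) - V0 = (Vs - V0) + Vs * x := by ring
  simp only [diagonal_mulVec_eq_mul, ← mulVec_mulVec, hsplit, mulVec_add, star_add,
    star_mulVec_eq_mconj_mulVec, star_mul', ← hbase]
  ring

theorem exists_powerFlow_solution (hbase : diagonal Vs *ᵥ star (Y *ᵥ (Vs - V0)) = ss)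
    (hVs : ∀ i, Vs i ≠ 0) {Z : Matrix (Fin n) (Fin n) ℂ}
    (hWZ : diagonal Vs * mconj Y * diagonal (star Vs) * Z = 1) {s Δs : Fin n → ℂ}
    (hΔs : Δs = s - ss) (u : Fin n → ℂ)
    (hu : u * (1 + star (Z *ᵥ (Δs - s * u))) = star (Z *ᵥ (Δs - s * u))) :
    ∃ V : Fin n → ℂ, (∀ i, V i ≠ 0) ∧ diagonal V *ᵥ star (Y *ᵥ (V - V0)) = s := by
  set x := star (Z *ᵥ (Δs - s * u))
  have hx : star x = Z *ᵥ (Δs - s * u) := star_star _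
  have hinv : (1 + x) * (1 - u) = 1 := by linear_combination -hu
  refine ⟨Vs * (1 + x), fun i => mul_ne_zero (hVs i) (left_ne_zero_of_mul_eq_one
    (congrFun hinv i)), ?_⟩
  rw [powerFlow_mul_one_add hbase, hx, mulVec_mulVec, hWZ, one_mulVec, hΔs]
  linear_combination s * hinv

end PowerFlow

section PairMulVec

variable {n : ℕ}

/-- `J⁻¹ (v, conj v) = (pairMulVec M N v, conj (pairMulVec M N v))` when `J⁻¹` has blocks
`M, N, conj N, conj M`: this is the `ℝ`-linear map of `ℂⁿ` that `J⁻¹` represents. -/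
def pairMulVec (M N : Matrix (Fin n) (Fin n) ℂ) (v : Fin n → ℂ) : Fin n → ℂ :=
  M *ᵥ v + N *ᵥ star v

theorem pairMulVec_add (M N : Matrix (Fin n) (Fin n) ℂ) (v w : Fin n → ℂ) :
    pairMulVec M N (v + w) = pairMulVec M N v + pairMulVec M N w := by
  simp only [pairMulVec, mulVec_add, star_add]; abel

theorem pairMulVec_sub (M N : Matrix (Fin n) (Fin n) ℂ) (v w : Fin n → ℂ) :
    pairMulVec M N (v - w) = pairMulVec M N v - pairMulVec M N w := by
  simp only [pairMulVec, mulVec_sub, star_sub]; abel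

theorem norm_pairMulVec_le {M N C D : Matrix (Fin n) (Fin n) ℂ}
    {P : Matrix (Fin n ⊕ Fin n) (Fin n ⊕ Fin n) ℂ} (hP : P = fromBlocks M N C D) (v : Fin n → ℂ) :
    ‖pairMulVec M N v‖ ≤ mnorm2 P * ‖v‖ := by
  have hw : ‖(Sum.elim v (star v) : Fin n ⊕ Fin n → ℂ)‖ ≤ ‖v‖ :=
    (pi_norm_le_iff_of_nonneg (norm_nonneg v)).2 fun
      | .inl i => norm_le_pi_norm v i
      | .inr i => by simpa using norm_le_pi_norm v i
  refine (pi_norm_le_iff_of_nonneg (by have := mnorm2_nonneg P; positivity)).2 fun i => ?_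
  calc ‖pairMulVec M N v i‖ = ‖(P *ᵥ Sum.elim v (star v)) (.inl i)‖ := by
        simp [hP, pairMulVec, fromBlocks_mulVec]
    _ ≤ mnorm2 P * ‖(Sum.elim v (star v) : Fin n ⊕ Fin n → ℂ)‖ :=
        (norm_le_pi_norm _ _).trans (norm_mulVec_le_iSup_sum_norm P _)
    _ ≤ mnorm2 P * ‖v‖ := by gcongr; exact mnorm2_nonneg P

variable {B C M N M' N' : Matrix (Fin n) (Fin n) ℂ}

theorem fromBlocks_one_mul_eq_one_iff :
    fromBlocks 1 B C 1 * fromBlocks M N N' M' = 1 ↔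
      M + B * N' = 1 ∧ N + B * M' = 0 ∧ C * M + N' = 0 ∧ C * N + M' = 1 := by
  rw [fromBlocks_multiply, ← fromBlocks_one, fromBlocks_inj]
  simp only [Matrix.one_mul]

theorem fromBlocks_mul_one_eq_one_iff :
    fromBlocks M N N' M' * fromBlocks 1 B C 1 = 1 ↔
      M + N * C = 1 ∧ M * B + N = 0 ∧ N' + M' * C = 0 ∧ N' * B + M' = 1 := by
  rw [fromBlocks_multiply, ← fromBlocks_one, fromBlocks_inj]
  simp only [Matrix.mul_one]

theorem one_sub_mul_mul_eq_one (h₁ : M + B * N' = 1) (h₂ : C * M + N' = 0) :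
    (1 - B * C) * M = 1 := by
  calc (1 - B * C) * M = M + B * N' := by rw [eq_neg_of_add_eq_zero_right h₂]; noncomm_ring
    _ = 1 := h₁

theorem pairMulVec_add_mulVec_star (h₁ : M + B * mconj N = 1) (h₂ : N + B * mconj M = 0)
    (v : Fin n → ℂ) : pairMulVec M N v + B *ᵥ star (pairMulVec M N v) = v := by
  calc _ = (M + B * mconj N) *ᵥ v + (N + B * mconj M) *ᵥ star v := by
        simp only [pairMulVec, star_add, star_mulVec_eq_mconj_mulVec, star_star, mulVec_add,
          add_mulVec, mulVec_mulVec]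
        abel
    _ = v := by rw [h₁, h₂, one_mulVec, zero_mulVec, add_zero]

theorem not_isUnit_fromBlocks_of_mulVec_eq_star {e : Fin n → ℂ} (he : e ≠ 0)
    (hBe : B *ᵥ e = star e) : ¬ IsUnit (fromBlocks 1 B (mconj B) 1) := by
  intro hJ
  have hker : fromBlocks 1 B (mconj B) 1 *ᵥ Sum.elim (star e) (-e) = 0 := by
    have hBe' : mconj B *ᵥ star e = e := by rw [← star_mulVec_eq_mconj_mulVec, hBe, star_star]
    ext (i | i) <;> simp [fromBlocks_mulVec, mulVec_neg, hBe, hBe']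
  have h := eq_zero_of_mulVec_eq_zero ((isUnit_iff_isUnit_det _).1 hJ).ne_zero hker
  exact he (neg_eq_zero.1 (congrArg (· ∘ Sum.inr) h))

end PairMulVec

section NewtonMap

variable {n : ℕ}

/-- With `B = conj Z diag (conj s_*)`, the relation `u ⊙ (1 + x) = x`, `x = conj (Z (Δs - s ⊙ u))`,
reads `u + B conj u = w u` for the argument `w u` of `pairMulVec` below; inverting the left-hand
side gives the fixed-point form `u = newtonMap M N Z s Δs u`. -/
def newtonMap (M N Z : Matrix (Fin n) (Fin n) ℂ) (s Δs u : Fin n → ℂ) : Fin n → ℂ :=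
  pairMulVec M N
    (star (Z *ᵥ Δs) * (1 - u) - mconj Z *ᵥ (star Δs * star u) + u * star (Z *ᵥ (s * u)))

theorem newtonMap_eq (M N Z : Matrix (Fin n) (Fin n) ℂ) (s Δs u : Fin n → ℂ) :
    newtonMap M N Z s Δs u =
      (M * mconj Z * diagonal (star Δs) + N * Z * diagonal Δs) *ᵥ 1
        - (M * diagonal (star (Z *ᵥ Δs)) + N * Z * diagonal Δs) *ᵥ u
        - (M * mconj Z * diagonal (star Δs) + N * diagonal (Z *ᵥ Δs)) *ᵥ star u
        + pairMulVec M N (u * star ((Z * diagonal s) *ᵥ u)) := by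
  simp only [newtonMap, pairMulVec_add, pairMulVec_sub, mul_sub, mul_one]
  simp only [pairMulVec, add_mulVec, ← mulVec_mulVec, diagonal_mulVec_eq_mul, star_mul',
    star_mulVec_eq_mconj_mulVec, mconj_mconj, star_star, mul_one]
  abel

theorem mul_one_add_eq_of_newtonMap_eq {M N Z : Matrix (Fin n) (Fin n) ℂ} {ss s Δs u : Fin n → ℂ}
    (hG : ∀ v, pairMulVec M N v + (mconj Z * diagonal (star ss)) *ᵥ star (pairMulVec M N v) = v)
    (hΔs : Δs = s - ss) (hu : newtonMap M N Z s Δs u = u) :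
    u * (1 + star (Z *ᵥ (Δs - s * u))) = star (Z *ᵥ (Δs - s * u)) := by
  have h := hG (star (Z *ᵥ Δs) * (1 - u) - mconj Z *ᵥ (star Δs * star u)
    + u * star (Z *ᵥ (s * u)))
  rw [← newtonMap, hu] at h
  subst hΔs
  simp only [← mulVec_mulVec, diagonal_mulVec_eq_mul, star_mulVec_eq_mconj_mulVec, star_sub,
    star_mul', mulVec_sub, sub_mul] at h ⊢
  linear_combination h

theorem norm_mul_star_mulVec_sub_le (W : Matrix (Fin n) (Fin n) ℂ) (u v : Fin n → ℂ) :
    ‖u * star (W *ᵥ u) - v * star (W *ᵥ v)‖ ≤ mnorm W * (‖u‖ + ‖v‖) * ‖u - v‖ := by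
  have hsplit : u * star (W *ᵥ u) - v * star (W *ᵥ v)
      = (u - v) * star (W *ᵥ u) + v * star (W *ᵥ (u - v)) := by
    simp only [mulVec_sub, star_sub]; ring
  have hW := mnorm_nonneg W
  rw [hsplit]
  calc _ ≤ ‖u - v‖ * ‖W *ᵥ u‖ + ‖v‖ * ‖W *ᵥ (u - v)‖ := by
        refine (norm_add_le _ _).trans (add_le_add ?_ ?_) <;>
          exact (norm_mul_le _ _).trans_eq (by rw [norm_star_pi])
    _ ≤ ‖u - v‖ * (mnorm W * ‖u‖) + ‖v‖ * (mnorm W * ‖u - v‖) := by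
        gcongr <;> exact norm_mulVec_le_mnorm _ _
    _ = mnorm W * (‖u‖ + ‖v‖) * ‖u - v‖ := by ring

theorem norm_newtonMap_zero_le (M N Z : Matrix (Fin n) (Fin n) ℂ) (s Δs : Fin n → ℂ) :
    ‖newtonMap M N Z s Δs 0‖ ≤ mnorm (M * mconj Z * diagonal (star Δs) + N * Z * diagonal Δs) := by
  rw [newtonMap_eq]
  simp only [zero_mul, star_zero, mulVec_zero, sub_zero, pairMulVec, add_zero]
  exact (norm_mulVec_le_mnorm _ _).trans (mul_le_of_le_one_right (mnorm_nonneg _) norm_one_pi_le)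

theorem norm_newtonMap_sub_le {M N Z : Matrix (Fin n) (Fin n) ℂ}
    {P : Matrix (Fin n ⊕ Fin n) (Fin n ⊕ Fin n) ℂ} (hP : P = fromBlocks M N (mconj N) (mconj M))
    (s Δs u v : Fin n → ℂ) :
    ‖newtonMap M N Z s Δs u - newtonMap M N Z s Δs v‖ ≤
      (mnorm (M * mconj Z * diagonal (star Δs) + N * diagonal (Z *ᵥ Δs))
        + mnorm (M * diagonal (star (Z *ᵥ Δs)) + N * Z * diagonal Δs)
        + mnorm2 P * mnorm (Z * diagonal s) * (‖u‖ + ‖v‖)) * ‖u - v‖ := by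
  set T₂ := M * mconj Z * diagonal (star Δs) + N * diagonal (Z *ᵥ Δs)
  set T₃ := M * diagonal (star (Z *ᵥ Δs)) + N * Z * diagonal Δs
  set W := Z * diagonal s
  have hdiff : newtonMap M N Z s Δs u - newtonMap M N Z s Δs v
      = T₃ *ᵥ (v - u) + T₂ *ᵥ star (v - u)
        + pairMulVec M N (u * star (W *ᵥ u) - v * star (W *ᵥ v)) := by
    simp only [newtonMap_eq, pairMulVec_sub, mulVec_sub, star_sub]; abel
  rw [hdiff]
  calc _ ≤ mnorm T₃ * ‖u - v‖ + mnorm T₂ * ‖u - v‖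
        + mnorm2 P * (mnorm W * (‖u‖ + ‖v‖) * ‖u - v‖) := by
        refine (norm_add_le _ _).trans (add_le_add ((norm_add_le _ _).trans (add_le_add ?_ ?_)) ?_)
        · exact (norm_mulVec_le_mnorm _ _).trans_eq (by rw [norm_sub_rev])
        · exact (norm_mulVec_le_mnorm _ _).trans_eq (by rw [norm_star_pi, norm_sub_rev])
        · exact (norm_pairMulVec_le hP _).trans
            (by gcongr; exacts [mnorm2_nonneg P, norm_mul_star_mulVec_sub_le W u v])
    _ = _ := by ring

theorem exists_newtonMap_eq_self {M N Z : Matrix (Fin n) (Fin n) ℂ} {s Δs : Fin n → ℂ}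
    {J : Matrix (Fin n ⊕ Fin n) (Fin n ⊕ Fin n) ℂ} (hJu : IsUnit J)
    (hMN : J⁻¹ = fromBlocks M N (mconj N) (mconj M)) (hW : Z * diagonal s ≠ 0)
    (hcond : 2 * Real.sqrt
          (mnorm (M * mconj Z * diagonal (star Δs) + N * Z * diagonal Δs)
            * mnorm2 J⁻¹ * mnorm (Z * diagonal s))
      + mnorm (M * mconj Z * diagonal (star Δs) + N * diagonal (Z *ᵥ Δs))
      + mnorm (M * diagonal (star (Z *ᵥ Δs)) + N * Z * diagonal Δs) ≤ 1) :
    ∃ u, newtonMap M N Z s Δs u = u := by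
  have : Nonempty (Fin n) := by
    by_contra h
    rw [not_nonempty_iff] at h
    exact hW (Subsingleton.elim _ _)
  have hJinv : J⁻¹ ≠ 0 := fun h => one_ne_zero <| by
    rw [← mul_nonsing_inv J ((isUnit_iff_isUnit_det J).1 hJu), h, Matrix.mul_zero]
  refine exists_fixedPt_of_norm_sub_le (add_nonneg (mnorm_nonneg _) (mnorm_nonneg _))
    (mul_pos (iSup_sum_norm_pos hJinv) (iSup_sum_norm_pos hW))
    (norm_newtonMap_zero_le M N Z s Δs) (norm_newtonMap_sub_le hMN s Δs) ?_
  rw [← mul_assoc, ← add_assoc]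
  exact hcond

end NewtonMap

theorem mulVec_single_eq_neg_of_one_add_eq_zero {n : ℕ} {Z M N : Matrix (Fin n) (Fin n) ℂ}
    {ss Δs : Fin n → ℂ} (hMC : M + N * (Z * diagonal ss) = 1) (hΔs : Δs = -ss) {k : Fin n}
    (hk : 1 + (Z *ᵥ Δs) k = 0) :
    (M * diagonal (star (Z *ᵥ Δs)) + N * Z * diagonal Δs) *ᵥ Pi.single k 1 = -Pi.single k 1 := by
  have hsingle : (star (Z *ᵥ Δs) + 1) * Pi.single k 1 = 0 := by
    rw [← Pi.single_mul_right, Pi.add_apply, Pi.star_apply, eq_neg_of_add_eq_zero_right hk]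
    simp
  have hNZ : N * Z * diagonal Δs = M - 1 := by
    rw [hΔs, show diagonal (-ss) = -diagonal ss from (diagonal_neg ss).symm, Matrix.mul_neg,
      Matrix.mul_assoc, ← hMC]
    abel
  have hM : M *ᵥ (star (Z *ᵥ Δs) * Pi.single k 1) + M *ᵥ Pi.single k 1 = 0 := by
    rw [← mulVec_add, ← add_one_mul, hsingle, mulVec_zero]
  rw [hNZ, add_mulVec, sub_mulVec, ← mulVec_mulVec, diagonal_mulVec_eq_mul, one_mulVec]
  linear_combination hM

/-- If `1 + (Z Δs)_k = 0`, the second matrix in `hT` maps `e_k` to `-e_k`, so its norm is at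
least `1` and the first one must vanish; with the block identities of `J⁻¹` this makes
`(conj (Z Δs), -Z Δs)` a kernel vector of `J`. -/
theorem one_add_mulVec_ne_zero {n : ℕ} {Z M N : Matrix (Fin n) (Fin n) ℂ} {ss Δs : Fin n → ℂ}
    {J : Matrix (Fin n ⊕ Fin n) (Fin n ⊕ Fin n) ℂ}
    (hJ : J = fromBlocks 1 (mconj Z * diagonal (star ss)) (Z * diagonal ss) 1) (hJu : IsUnit J)
    (hMN : J⁻¹ = fromBlocks M N (mconj N) (mconj M)) (hΔs : Δs = -ss)
    (hT : mnorm (M * mconj Z * diagonal (star Δs) + N * diagonal (Z *ᵥ Δs))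
      + mnorm (M * diagonal (star (Z *ᵥ Δs)) + N * Z * diagonal Δs) ≤ 1)
    (k : Fin n) : 1 + (Z *ᵥ Δs) k ≠ 0 := by
  intro hk
  set B := mconj Z * diagonal (star ss)
  set e := Z *ᵥ Δs
  have hC : Z * diagonal ss = mconj B := by
    rw [mconj_mul, mconj_mconj, mconj_diagonal, star_star]
  rw [hC] at hJ
  have hdet := (isUnit_iff_isUnit_det J).1 hJu
  obtain ⟨hMC, hMB, -, -⟩ := fromBlocks_mul_one_eq_one_iff.1 <| by
    rw [← hMN, ← hJ]; exact nonsing_inv_mul J hdet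
  obtain ⟨hMN', -, hCM, -⟩ := fromBlocks_one_mul_eq_one_iff.1 <| by
    rw [← hMN, ← hJ]; exact mul_nonsing_inv J hdet
  have hT₃ : 1 ≤ mnorm (M * diagonal (star e) + N * Z * diagonal Δs) :=
    one_le_mnorm_of_mulVec_eq_neg (Pi.single_eq_zero_iff.not.2 one_ne_zero)
      (mulVec_single_eq_neg_of_one_add_eq_zero (by rwa [hC]) hΔs hk)
  have hT₂ : (M * mconj Z * diagonal (star Δs) + N * diagonal e) *ᵥ 1 = 0 :=
    mulVec_eq_zero_of_iSup_sum_norm_nonpos (show mnorm _ ≤ 0 by linarith) 1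
  have hT₂eq : M * mconj Z * diagonal (star Δs) + N * diagonal e
      = -(M * (B * (1 + diagonal e))) := by
    rw [eq_neg_of_add_eq_zero_right hMB, hΔs, star_neg,
      show diagonal (-star ss) = -diagonal (star ss) from (diagonal_neg _).symm]
    simp only [B]
    noncomm_ring
  have hB1e : B *ᵥ (1 + e) = 0 := by
    rw [hT₂eq, neg_mulVec, neg_eq_zero, ← mulVec_mulVec, ← mulVec_mulVec, add_mulVec,
      one_mulVec, diagonal_mulVec_eq_mul, mul_one] at hT₂
    rw [← one_mulVec (B *ᵥ _), ← one_sub_mul_mul_eq_one hMN' hCM, ← mulVec_mulVec, hT₂,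
      mulVec_zero]
  have hB1 : B *ᵥ 1 = -star e := by
    rw [← mulVec_mulVec, diagonal_mulVec_eq_mul, mul_one, star_mulVec_eq_mconj_mulVec, hΔs,
      star_neg, mulVec_neg, neg_neg]
  refine not_isUnit_fromBlocks_of_mulVec_eq_star (e := e) ?_ ?_ (hJ ▸ hJu)
  · rintro he
    simp [he] at hk
  · rw [mulVec_add, hB1] at hB1e
    linear_combination hB1e

theorem solvability_certificate_opt_r_general {n : ℕ}
    (Y : Matrix (Fin n) (Fin n) ℂ) (hY : IsUnit Y)
    (V0 Vs ss : Fin n → ℂ)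
    (hVs : ∀ i, Vs i ≠ 0)
    (hbase : Matrix.diagonal Vs *ᵥ star (Y *ᵥ (Vs - V0)) = ss)
    (Z : Matrix (Fin n) (Fin n) ℂ)
    (hZ : Z = (Matrix.diagonal (star Vs))⁻¹ * (mconj Y)⁻¹ * (Matrix.diagonal Vs)⁻¹)
    (J : Matrix (Fin n ⊕ Fin n) (Fin n ⊕ Fin n) ℂ)
    (hJ : J = Matrix.fromBlocks 1 (mconj Z * Matrix.diagonal (star ss))
                (Z * Matrix.diagonal ss) 1)
    (hJu : IsUnit J)
    (M N : Matrix (Fin n) (Fin n) ℂ)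
    (hMN : J⁻¹ = Matrix.fromBlocks M N (mconj N) (mconj M))
    (s : Fin n → ℂ)
    (Δs : Fin n → ℂ) (hΔs : Δs = s - ss)
    (hcond :
      2 * Real.sqrt
          (mnorm (M * mconj Z * Matrix.diagonal (star Δs) + N * Z * Matrix.diagonal Δs)
            * mnorm2 J⁻¹ * mnorm (Z * Matrix.diagonal s))
      + mnorm (M * mconj Z * Matrix.diagonal (star Δs) + N * Matrix.diagonal (Z *ᵥ Δs))
      + mnorm (M * Matrix.diagonal (star (Z *ᵥ Δs)) + N * Z * Matrix.diagonal Δs) ≤ 1) :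
    ∃ V : Fin n → ℂ, (∀ i, V i ≠ 0) ∧
      Matrix.diagonal V *ᵥ star (Y *ᵥ (V - V0)) = s := by
  have hWZ := mul_eq_one_of_eq_inv hY hVs hZ
  suffices h : ∃ u, u * (1 + star (Z *ᵥ (Δs - s * u))) = star (Z *ᵥ (Δs - s * u)) by
    obtain ⟨u, hu⟩ := h
    exact exists_powerFlow_solution hbase hVs hWZ hΔs u hu
  by_cases hs : s = 0
  · subst hs
    have hne : ∀ i, 1 + star (Z *ᵥ Δs) i ≠ 0 := fun i h =>
      one_add_mulVec_ne_zero hJ hJu hMN (hΔs.trans (zero_sub ss))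
        (hcond.trans' (by rw [add_assoc]; exact le_add_of_nonneg_left (by positivity))) i
        (by simpa using congrArg star h)
    refine ⟨star (Z *ᵥ Δs) / (1 + star (Z *ᵥ Δs)), funext fun i => ?_⟩
    simp only [zero_mul, sub_zero, Pi.mul_apply, Pi.div_apply, Pi.add_apply, Pi.one_apply]
    exact div_mul_cancel₀ _ (hne i)
  · obtain ⟨hM, hN, -, -⟩ := fromBlocks_one_mul_eq_one_iff.1 <| by
      rw [← hMN, ← hJ]; exact mul_nonsing_inv J ((isUnit_iff_isUnit_det J).1 hJu)
    obtain ⟨u, hu⟩ := exists_newtonMap_eq_self hJu hMN (fun hW => hs (diagonal_eq_zero.1 <| by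
      rw [← Matrix.one_mul (diagonal s), ← hWZ, Matrix.mul_assoc, hW, Matrix.mul_zero])) hcond
    exact ⟨u, mul_one_add_eq_of_newtonMap_eq (pairMulVec_add_mulVec_star hM hN) hΔs hu⟩

theorem solvability_certificate_opt_r {n : ℕ} (hn : 1 ≤ n)
    (Y : Matrix (Fin n) (Fin n) ℂ) (hY : IsUnit Y)
    (V0 Vs ss : Fin n → ℂ)
    (hVs : ∀ i, Vs i ≠ 0)
    (hbase : Matrix.diagonal Vs *ᵥ star (Y *ᵥ (Vs - V0)) = ss)
    (Z : Matrix (Fin n) (Fin n) ℂ)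
    (hZ : Z = (Matrix.diagonal (star Vs))⁻¹ * (mconj Y)⁻¹ * (Matrix.diagonal Vs)⁻¹)
    (J : Matrix (Fin n ⊕ Fin n) (Fin n ⊕ Fin n) ℂ)
    (hJ : J = Matrix.fromBlocks 1 (mconj Z * Matrix.diagonal (star ss))
                (Z * Matrix.diagonal ss) 1)
    (hJu : IsUnit J)
    (M N : Matrix (Fin n) (Fin n) ℂ)
    (hMN : J⁻¹ = Matrix.fromBlocks M N (mconj N) (mconj M))
    (s : Fin n → ℂ)
    (Δs : Fin n → ℂ) (hΔs : Δs = s - ss)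
    (hcond :
      2 * Real.sqrt
          (mnorm (M * mconj Z * Matrix.diagonal (star Δs) + N * Z * Matrix.diagonal Δs)
            * mnorm2 J⁻¹ * mnorm (Z * Matrix.diagonal s))
      + mnorm (M * mconj Z * Matrix.diagonal (star Δs) + N * Matrix.diagonal (Z *ᵥ Δs))
      + mnorm (M * Matrix.diagonal (star (Z *ᵥ Δs)) + N * Z * Matrix.diagonal Δs) ≤ 1) :
    ∃ V : Fin n → ℂ, (∀ i, V i ≠ 0) ∧
      Matrix.diagonal V *ᵥ star (Y *ᵥ (V - V0)) = s :=
  solvability_certificate_opt_r_general Y hY V0 Vs ss hVs hbase Z hZ J hJ hJu M N hMN s Δs hΔs hcond
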